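/- arXiv:2407.18713 — 11 statements merged into one kernel-verified Lean document; each statement's English description precedes it below -/
import Mathlib

section
/- Let X be a topological space with a countable network, such that both the cardinality of X and the weight of X are strictly less than the dominating number 𝔡. Then X is M-nw-selective: for every sequence (𝒩ₙ : n ∈ ω) of countable networks for X, one can select finite ℱₙ ⊆ 𝒩ₙ such that ⋃ₙ ℱₙ is a network for X. -/
/-!
Enumerate (a superset of) each network `𝒩ₙ` as `eₙ 0, eₙ 1, …`. For a point `x` and a basic open set `V ∋ x`
let `k_{x,V}(n)` be an index with `x ∈ eₙ (k_{x,V}(n)) ⊆ V`. There are fewer than `𝔡` such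
functions, since `|X| · w(X) < 𝔡`, so some `g` is not eventually dominated by any of them:
`k_{x,V}(n) < g(n)` for some `n`. Hence the finite families `ℱₙ = 𝒩ₙ ∩ {eₙ k | k < g(n)}` together
form a network.
-/

open Set Filter Topology TopologicalSpace

def IsNetwork (X : Type) [TopologicalSpace X] (N : Set (Set X)) : Prop :=
  ∀ (x : X) (U : Set X), IsOpen U → x ∈ U → ∃ A ∈ N, x ∈ A ∧ A ⊆ U

def IsNetworkAt (X : Type) [TopologicalSpace X] (N : Set (Set X)) (x : X) : Prop :=
  ∀ U : Set X, IsOpen U → x ∈ U → ∃ A ∈ N, x ∈ A ∧ A ⊆ U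

def HasCountableNetwork (X : Type) [TopologicalSpace X] : Prop :=
  ∃ N : Set (Set X), N.Countable ∧ IsNetwork X N

def MNwSelective (X : Type) [TopologicalSpace X] : Prop :=
  HasCountableNetwork X ∧
  ∀ N : ℕ → Set (Set X), (∀ n, (N n).Countable ∧ IsNetwork X (N n)) →
    ∃ F : ℕ → Set (Set X), (∀ n, F n ⊆ N n ∧ (F n).Finite) ∧
      IsNetwork X (⋃ n, F n)

def RNwSelective (X : Type) [TopologicalSpace X] : Prop :=
  HasCountableNetwork X ∧
  ∀ N : ℕ → Set (Set X), (∀ n, (N n).Countable ∧ IsNetwork X (N n)) →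
    ∃ s : ℕ → Set X, (∀ n, s n ∈ N n) ∧ IsNetwork X (Set.range s)

def HNwSelective (X : Type) [TopologicalSpace X] : Prop :=
  HasCountableNetwork X ∧
  ∀ N : ℕ → Set (Set X), (∀ n, (N n).Countable ∧ IsNetwork X (N n)) →
    ∃ F : ℕ → Set (Set X), (∀ n, F n ⊆ N n ∧ (F n).Finite) ∧
      ∀ (x : X) (U : Set X), IsOpen U → x ∈ U →
        ∃ k : ℕ, ∀ n ≥ k, ∃ A ∈ F n, x ∈ A ∧ A ⊆ U

noncomputable def dominatingNumber : Cardinal :=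
  sInf {c | ∃ D : Set (ℕ → ℕ), Cardinal.mk D = c ∧
    ∀ g : ℕ → ℕ, ∃ f ∈ D, ∀ᶠ n in atTop, g n ≤ f n}

noncomputable def boundingNumber : Cardinal :=
  sInf {c | ∃ B : Set (ℕ → ℕ), Cardinal.mk B = c ∧
    ∀ g : ℕ → ℕ, ∃ f ∈ B, ¬ (∀ᶠ n in atTop, f n ≤ g n)}

noncomputable def covMeager : Cardinal :=
  sInf {c | ∃ S : Set (Set ℝ), Cardinal.mk S = c ∧ (∀ s ∈ S, IsMeagre s) ∧ ⋃₀ S = Set.univ}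

noncomputable def weight' (X : Type) [TopologicalSpace X] : Cardinal :=
  sInf {c | ∃ B : Set (Set X), Cardinal.mk B = c ∧ TopologicalSpace.IsTopologicalBasis B}

open Cardinal

lemma exists_mk_eq_sInf {α : Type} {P : Set α → Prop} (h : ∃ D : Set α, P D) :
    ∃ D : Set α, #D = sInf {c | ∃ D : Set α, #D = c ∧ P D} ∧ P D :=
  let ⟨D, hD⟩ := h
  csInf_mem (s := {c | ∃ D : Set α, #D = c ∧ P D}) ⟨#D, D, rfl, hD⟩

lemma aleph0_le_dominatingNumber : ℵ₀ ≤ dominatingNumber := by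
  obtain ⟨D, hD, hdom⟩ : ∃ D : Set (ℕ → ℕ), #D = dominatingNumber ∧
      ∀ g : ℕ → ℕ, ∃ f ∈ D, ∀ᶠ n in atTop, g n ≤ f n :=
    exists_mk_eq_sInf ⟨univ, fun g => ⟨g, mem_univ g, .of_forall fun _ => le_rfl⟩⟩
  by_contra! hlt
  rw [← hD, lt_aleph0_iff_set_finite] at hlt
  obtain ⟨f, hfD, hf⟩ := hdom fun n => (hlt.toFinset.sup fun f => f n) + 1
  obtain ⟨n, hn⟩ := hf.exists
  have hle : f n ≤ hlt.toFinset.sup fun f => f n :=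
    Finset.le_sup (f := fun f => f n) (hlt.mem_toFinset.2 hfD)
  omega

lemma exists_forall_frequently_lt_of_mk_lt_dominatingNumber {ι : Type} (f : ι → ℕ → ℕ)
    (hι : #ι < dominatingNumber) : ∃ g : ℕ → ℕ, ∀ i, ∃ᶠ n in atTop, f i n < g n := by
  by_contra! hdom
  have hle : dominatingNumber ≤ #(range f) :=
    csInf_le' ⟨range f, rfl, fun g =>
      let ⟨i, hi⟩ := hdom g
      ⟨f i, mem_range_self i, hi⟩⟩
  exact (hle.trans mk_range_le).not_gt hι

lemma exists_isTopologicalBasis_mk_eq_weight' (X : Type) [TopologicalSpace X] :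
    ∃ B : Set (Set X), #B = weight' X ∧ IsTopologicalBasis B :=
  exists_mk_eq_sInf ⟨{U | IsOpen U}, isTopologicalBasis_opens⟩

lemma isNetwork_of_isTopologicalBasis {X : Type} [TopologicalSpace X] {B N : Set (Set X)}
    (hB : IsTopologicalBasis B) (hN : ∀ V ∈ B, ∀ x ∈ V, ∃ A ∈ N, x ∈ A ∧ A ⊆ V) :
    IsNetwork X N := by
  intro x U hU hxU
  obtain ⟨V, hVB, hxV, hVU⟩ := hB.exists_subset_of_mem_open hxU hU
  obtain ⟨A, hAN, hxA, hAV⟩ := hN V hVB x hxV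
  exact ⟨A, hAN, hxA, hAV.trans hVU⟩

lemma exists_finite_subfamilies_isNetwork {X : Type} [TopologicalSpace X] {B : Set (Set X)}
    (hB : IsTopologicalBasis B) (hXB : #(X × B) < dominatingNumber)
    (N : ℕ → Set (Set X)) (hN : ∀ n, (N n).Countable ∧ IsNetwork X (N n)) :
    ∃ F : ℕ → Set (Set X), (∀ n, F n ⊆ N n ∧ (F n).Finite) ∧ IsNetwork X (⋃ n, F n) := by
  choose e he using fun n => countable_iff_exists_subset_range.1 (hN n).1
  have hindex : ∀ (p : X × B) (n : ℕ), ∃ k,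
      p.1 ∈ (p.2 : Set X) → e n k ∈ N n ∧ p.1 ∈ e n k ∧ e n k ⊆ p.2 := by
    rintro ⟨x, V, hV⟩ n
    by_cases hxV : x ∈ V
    · obtain ⟨A, hAN, hxA, hAV⟩ := (hN n).2 x V (hB.isOpen hV) hxV
      obtain ⟨k, rfl⟩ := he n hAN
      exact ⟨k, fun _ => ⟨hAN, hxA, hAV⟩⟩
    · exact ⟨0, fun h => absurd h hxV⟩
  choose k hk using hindex
  obtain ⟨g, hg⟩ := exists_forall_frequently_lt_of_mk_lt_dominatingNumber k hXB
  refine ⟨fun n => N n ∩ e n '' Iio (g n),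
    fun n => ⟨inter_subset_left, ((finite_Iio _).image _).subset inter_subset_right⟩, ?_⟩
  refine isNetwork_of_isTopologicalBasis hB fun V hV x hxV => ?_
  obtain ⟨n, hn⟩ := (hg (x, ⟨V, hV⟩)).exists
  obtain ⟨hAN, hxA, hAV⟩ := hk (x, ⟨V, hV⟩) n hxV
  exact ⟨_, mem_iUnion.2 ⟨n, hAN, mem_image_of_mem _ hn⟩, hxA, hAV⟩

theorem stmt0 (X : Type) [TopologicalSpace X]
    (h1 : HasCountableNetwork X)
    (h2 : Cardinal.mk X < dominatingNumber)
    (h3 : weight' X < dominatingNumber) :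
    MNwSelective X := by
  obtain ⟨B, hBw, hB⟩ := exists_isTopologicalBasis_mk_eq_weight' X
  have hXB : #(X × B) < dominatingNumber := by
    rw [mk_prod, lift_id, lift_id, hBw]
    exact mul_lt_of_lt aleph0_le_dominatingNumber h2 h3
  exact ⟨h1, exists_finite_subfamilies_isNetwork hB hXB⟩
end

section
/- Let X be a topological space with a countable network, such that both the cardinality of X and the weight of X are strictly less than the bounding number 𝔟. Then X is H-nw-selective: for every sequence (𝒩ₙ : n ∈ ω) of countable networks for X, one can select finite ℱₙ ⊆ 𝒩ₙ such that for every x ∈ X and every open neighborhood U of x, there exists κ ∈ ω such that for all n ≥ κ some A ∈ ℱₙ satisfies x ∈ A ⊆ U. -/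
open Set Filter Topology TopologicalSpace

/-!
Fix a basis `B` of size `w(X)`. For each pair `x ∈ V ∈ B` and each `n`, the network `𝒩ₙ` contains
some `A` with `x ∈ A ⊆ V`; recording its index under an injection `𝒩ₙ → ω` gives a function
`ω → ω`. There are at most `|X| · w(X) < 𝔟` such functions, so a single `g` eventually dominates
all of them, and `ℱₙ` = the members of `𝒩ₙ` with index at most `g n` works.
-/

open Cardinal

lemma aleph0_le_boundingNumber : ℵ₀ ≤ boundingNumber := by
  apply le_csInf
  · refine ⟨_, univ, rfl, fun g => ⟨fun n => g n + 1, trivial, fun h => ?_⟩⟩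
    obtain ⟨n, hn⟩ := h.exists
    exact Nat.not_succ_le_self _ hn
  · rintro c ⟨D, rfl, hD⟩
    by_contra! hlt
    have hfin : D.Finite := lt_aleph0_iff_set_finite.mp hlt
    obtain ⟨f, hfD, hf⟩ := hD (fun n => hfin.toFinset.sup (· n))
    exact hf (Eventually.of_forall fun n =>
      Finset.le_sup (f := (· n)) (hfin.mem_toFinset.mpr hfD))

lemma exists_eventually_le_of_mk_lt_boundingNumber {ι : Type} (f : ι → ℕ → ℕ)
    (hι : #ι < boundingNumber) : ∃ g : ℕ → ℕ, ∀ i, ∀ᶠ n in atTop, f i n ≤ g n := by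
  by_contra! hunb
  have : boundingNumber ≤ #(range f) := by
    refine csInf_le' ⟨range f, rfl, fun g => ?_⟩
    obtain ⟨i, hi⟩ := hunb g
    exact ⟨f i, mem_range_self i, not_eventually.mpr (hi.mono fun _ => not_le.mpr)⟩
  exact (this.trans mk_range_le).not_gt hι

lemma exists_finite_subsets_eventually_mem {α : Type*} {ι : Type} (S : ℕ → Set α)
    (hS : ∀ n, (S n).Countable) (a : ι → ℕ → α) (ha : ∀ i n, a i n ∈ S n)
    (hι : #ι < boundingNumber) :
    ∃ F : ℕ → Set α, (∀ n, F n ⊆ S n ∧ (F n).Finite) ∧ ∀ i, ∀ᶠ n in atTop, a i n ∈ F n := by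
  have hcode : ∀ n, ∃ e : S n → ℕ, Function.Injective e := fun n =>
    have := (hS n).to_subtype
    Countable.exists_injective_nat _
  choose e he using hcode
  obtain ⟨g, hg⟩ :=
    exists_eventually_le_of_mk_lt_boundingNumber (fun i n => e n ⟨a i n, ha i n⟩) hι
  refine ⟨fun n => Subtype.val '' (e n ⁻¹' Iic (g n)), fun n => ⟨?_, ?_⟩, fun i => ?_⟩
  · exact image_subset_iff.mpr fun y _ => y.2
  · exact ((finite_Iic _).preimage (he n).injOn).image _
  · exact (hg i).mono fun n hn => ⟨⟨a i n, ha i n⟩, hn, rfl⟩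

theorem hNwSelective_of_isTopologicalBasis {X : Type} [TopologicalSpace X]
    (hX : HasCountableNetwork X) {B : Set (Set X)} (hB : IsTopologicalBasis B)
    (hXB : #(X × B) < boundingNumber) : HNwSelective X := by
  refine ⟨hX, fun N hN => ?_⟩
  let P := {p : X × B // p.1 ∈ (p.2 : Set X)}
  have hP : #P < boundingNumber := (mk_subtype_le _).trans_lt hXB
  have hwitness : ∀ (p : P) n, ∃ A ∈ N n, p.1.1 ∈ A ∧ A ⊆ p.1.2 := fun p n =>
    (hN n).2 _ _ (hB.isOpen p.1.2.2) p.2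
  choose a haN hxa haV using hwitness
  obtain ⟨F, hFN, hF⟩ :=
    exists_finite_subsets_eventually_mem N (fun n => (hN n).1) a haN hP
  refine ⟨F, hFN, fun x U hU hxU => ?_⟩
  obtain ⟨V, hVB, hxV, hVU⟩ := hB.exists_subset_of_mem_open hxU hU
  let p : P := ⟨(x, ⟨V, hVB⟩), hxV⟩
  obtain ⟨k, hk⟩ := eventually_atTop.mp (hF p)
  exact ⟨k, fun n hn => ⟨a p n, hk n hn, hxa p n, (haV p n).trans hVU⟩⟩

theorem stmt2 (X : Type) [TopologicalSpace X]
    (h1 : HasCountableNetwork X)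
    (h2 : Cardinal.mk X < boundingNumber)
    (h3 : weight' X < boundingNumber) :
    HNwSelective X := by
  obtain ⟨B, hBw, hB⟩ := exists_isTopologicalBasis_mk_eq_weight' X
  refine hNwSelective_of_isTopologicalBasis h1 hB ?_
  rw [mk_prod, lift_id, lift_id]
  exact mul_lt_of_lt aleph0_le_boundingNumber h2 (hBw ▸ h3)
end

section
/- Every topological space X of cardinality at least the dominating number 𝔡 fails to be M-nw-selective. That is, either X has no countable network, or there exists a sequence (𝒩ₙ : n ∈ ω) of countable networks for X such that for every choice of finite subfamilies ℱₙ ⊆ 𝒩ₙ, the family ⋃ₙ ℱₙ is not a network for X (indeed it fails even to cover X). -/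
open Set Filter Topology TopologicalSpace

theorem stmt3 (X : Type) [TopologicalSpace X]
    (h : dominatingNumber ≤ Cardinal.mk X) :
    (¬ HasCountableNetwork X) ∨
    ∃ N : ℕ → Set (Set X), (∀ n, (N n).Countable ∧ IsNetwork X (N n)) ∧
      ∀ F : ℕ → Set (Set X), (∀ n, F n ⊆ N n ∧ (F n).Finite) →
        (⋃ n, ⋃₀ F n) ≠ Set.univ := by
  by_cases hcn : HasCountableNetwork X
  swap
  · exact Or.inl hcn
  right
  obtain ⟨𝒩, h𝒩c, h𝒩⟩ := hcn
  -- a dominating family of minimal cardinality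
  have hne : {c | ∃ D : Set (ℕ → ℕ), Cardinal.mk D = c ∧
      ∀ g : ℕ → ℕ, ∃ f ∈ D, ∀ᶠ n in atTop, g n ≤ f n}.Nonempty :=
    ⟨Cardinal.mk (Set.univ : Set (ℕ → ℕ)), Set.univ, rfl,
      fun g => ⟨g, Set.mem_univ g, Filter.Eventually.of_forall fun n => le_rfl⟩⟩
  obtain ⟨D, hDcard, hDdom⟩ := csInf_mem hne
  -- D is infinite
  have hDinf : D.Infinite := by
    by_contra hfin
    rw [Set.not_infinite] at hfin
    obtain ⟨f, hfD, hev⟩ := hDdom (fun n => (hfin.toFinset.sup fun f => f n) + 1)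
    obtain ⟨n, hn⟩ := hev.exists
    have : f n ≤ hfin.toFinset.sup fun f => f n :=
      Finset.le_sup (f := fun f => f n) (hfin.mem_toFinset.2 hfD)
    have hn' : (hfin.toFinset.sup fun f => f n) + 1 ≤ f n := hn
    exact Nat.not_succ_le_self _ (hn'.trans this)
  have haleph : (Cardinal.aleph0 : Cardinal) ≤ Cardinal.mk D :=
    Cardinal.aleph0_le_mk_iff.2 (Set.infinite_coe_iff.2 hDinf)
  -- the family closed under finite modifications
  set E : Set (ℕ → ℕ) :=
    Set.range (fun p : (ℕ →₀ ℕ) × D => fun n => p.1 n + (p.2 : ℕ → ℕ) n) with hE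
  have hEcard : Cardinal.mk E ≤ Cardinal.mk X := by
    calc Cardinal.mk E ≤ Cardinal.mk ((ℕ →₀ ℕ) × D) := Cardinal.mk_range_le
    _ ≤ Cardinal.aleph0 * Cardinal.mk D := by
        rw [Cardinal.mk_prod]
        simp only [Cardinal.lift_id]
        exact mul_le_mul_left (Cardinal.mk_le_aleph0) _
    _ ≤ Cardinal.mk D * Cardinal.mk D := mul_le_mul_left haleph _
    _ = Cardinal.mk D := Cardinal.mul_eq_self haleph
    _ = dominatingNumber := hDcard
    _ ≤ Cardinal.mk X := h
  obtain ⟨e⟩ := Cardinal.le_def _ _ |>.1 hEcard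
  set Y : Set X := Set.range (fun z : E => e z) with hY
  set H : X → ℕ → ℕ :=
    Function.extend (fun z : E => e z) (fun z => (z : ℕ → ℕ)) (fun _ _ => 0) with hHdef
  have hH : ∀ z : E, H (e z) = (z : ℕ → ℕ) := fun z => e.injective.extend_apply _ _ z
  -- everywhere domination by H-values on Y
  have hdom : ∀ g : ℕ → ℕ, ∃ y ∈ Y, ∀ n, g n ≤ H y n := by
    intro g
    obtain ⟨f, hfD, hev⟩ := hDdom g
    obtain ⟨m, hm⟩ := Filter.eventually_atTop.1 hev
    set s : ℕ →₀ ℕ := Finsupp.onFinset (Finset.range m)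
      (fun n => if n < m then g n else 0)
      (by intro n hn; simp only [Finset.mem_range]; by_contra hc; simp [hc] at hn) with hs
    refine ⟨e ⟨fun n => s n + f n, ⟨(s, ⟨f, hfD⟩), rfl⟩⟩, ⟨_, rfl⟩, ?_⟩
    rw [hH]
    intro n
    simp only [hs, Finsupp.onFinset_apply]
    by_cases hnm : n < m
    · simp [hnm]
    · have := hm n (le_of_not_gt hnm)
      omega
  -- enumerate the network
  have hXne : Nonempty X := by
    have hX0 : (Cardinal.aleph0 : Cardinal) ≤ Cardinal.mk X :=
      haleph.trans ((le_of_eq hDcard).trans h)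
    exact Cardinal.mk_ne_zero_iff.1 (lt_of_lt_of_le Cardinal.aleph0_pos hX0).ne'
  obtain ⟨x0⟩ := hXne
  have h𝒩ne : 𝒩.Nonempty := by
    obtain ⟨A, hA, _⟩ := h𝒩 x0 Set.univ isOpen_univ (Set.mem_univ x0)
    exact ⟨A, hA⟩
  obtain ⟨Nf, hNf⟩ := Set.Countable.exists_eq_range h𝒩c h𝒩ne
  -- the sequence of networks
  set N : ℕ → Set (Set X) := fun n =>
    {A | (∃ i k, A = Nf i ∩ {x | x ∈ Y ∧ H x n = k}) ∨ ∃ i, A = Nf i ∩ Yᶜ} with hNdef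
  refine ⟨N, fun n => ⟨?_, ?_⟩, ?_⟩
  · -- countable
    have : N n = Set.range (fun p : ℕ × ℕ => Nf p.1 ∩ {x | x ∈ Y ∧ H x n = p.2}) ∪
        Set.range (fun i => Nf i ∩ Yᶜ) := by
      ext A
      simp only [hNdef, Set.mem_setOf_eq, Set.mem_union, Set.mem_range, Prod.exists]
      constructor
      · rintro (⟨i, k, rfl⟩ | ⟨i, rfl⟩)
        · exact Or.inl ⟨i, k, rfl⟩
        · exact Or.inr ⟨i, rfl⟩
      · rintro (⟨i, k, rfl⟩ | ⟨i, rfl⟩)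
        · exact Or.inl ⟨i, k, rfl⟩
        · exact Or.inr ⟨i, rfl⟩
    rw [this]
    exact (Set.countable_range _).union (Set.countable_range _)
  · -- network
    intro x U hU hxU
    obtain ⟨A, hA, hxA, hAU⟩ := h𝒩 x U hU hxU
    rw [hNf] at hA
    obtain ⟨i, rfl⟩ := hA
    by_cases hxY : x ∈ Y
    · exact ⟨Nf i ∩ {z | z ∈ Y ∧ H z n = H x n}, Or.inl ⟨i, H x n, rfl⟩,
        ⟨hxA, hxY, rfl⟩, fun z hz => hAU hz.1⟩
    · exact ⟨Nf i ∩ Yᶜ, Or.inr ⟨i, rfl⟩, ⟨hxA, hxY⟩, fun z hz => hAU hz.1⟩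
  · -- no finite selection covers
    intro F hF
    set K : ℕ → Set ℕ := fun n => ⋃ A ∈ F n, (fun y : X => H y n) '' (A ∩ Y) with hK
    have hKfin : ∀ n, (K n).Finite := by
      intro n
      apply Set.Finite.biUnion (hF n).2
      intro A hA
      have hAN := (hF n).1 hA
      rcases hAN with ⟨i, k, rfl⟩ | ⟨i, rfl⟩
      · apply Set.Subsingleton.finite
        rintro a ⟨y, ⟨⟨-, -, hy⟩, -⟩, rfl⟩ b ⟨z, ⟨⟨-, -, hz⟩, -⟩, rfl⟩
        show H y n = H z n
        rw [hy, hz]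
      · have : (Nf i ∩ Yᶜ) ∩ Y = ∅ := by
          ext z; simp only [Set.mem_inter_iff, Set.mem_compl_iff, Set.mem_empty_iff_false,
            iff_false]; tauto
        rw [this, Set.image_empty]
        exact Set.finite_empty
    obtain ⟨y, hyY, hyall⟩ := hdom (fun n => sSup (K n) + 1)
    intro heq
    have hy : y ∈ ⋃ n, ⋃₀ F n := heq ▸ Set.mem_univ y
    obtain ⟨_, ⟨n, rfl⟩, A, hAF, hyA⟩ := hy
    have hmem : H y n ∈ K n := Set.mem_biUnion hAF ⟨y, ⟨hyA, hyY⟩, rfl⟩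
    have hle : H y n ≤ sSup (K n) := le_csSup (hKfin n).bddAbove hmem
    have := hyall n
    omega
end

section
/- Every topological space X of cardinality at least the bounding number 𝔟 fails to be H-nw-selective. That is, either X has no countable network, or there is a sequence (𝒩ₙ : n ∈ ω) of countable networks for X such that for every choice of finite ℱₙ ⊆ 𝒩ₙ there exist a point y ∈ X, an open neighborhood U of y, and infinitely many n for which no F ∈ ℱₙ satisfies y ∈ F ⊆ U. -/
open Set Filter Topology TopologicalSpace

theorem stmt5 (X : Type) [TopologicalSpace X]
    (h : boundingNumber ≤ Cardinal.mk X) :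
    (¬ HasCountableNetwork X) ∨
    ∃ N : ℕ → Set (Set X), (∀ n, (N n).Countable ∧ IsNetwork X (N n)) ∧
      ∀ F : ℕ → Set (Set X), (∀ n, F n ⊆ N n ∧ (F n).Finite) →
        ∃ (y : X) (U : Set X), IsOpen U ∧ y ∈ U ∧
          {n : ℕ | ¬ ∃ A ∈ F n, y ∈ A ∧ A ⊆ U}.Infinite := by
  by_cases hcn : HasCountableNetwork X
  swap
  · exact Or.inl hcn
  right
  obtain ⟨𝒩, h𝒩c, h𝒩⟩ := hcn
  -- an unbounded family of minimal cardinality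
  have hne : {c | ∃ B : Set (ℕ → ℕ), Cardinal.mk B = c ∧
      ∀ g : ℕ → ℕ, ∃ f ∈ B, ¬ (∀ᶠ n in atTop, f n ≤ g n)}.Nonempty := by
    refine ⟨_, Set.univ, rfl, fun g => ⟨fun n => g n + 1, trivial, fun hev => ?_⟩⟩
    obtain ⟨a, ha⟩ := Filter.eventually_atTop.mp hev
    exact Nat.not_succ_le_self (g a) (ha a le_rfl)
  obtain ⟨B, hBmk, hBu⟩ := csInf_mem hne
  have hle : Cardinal.mk B ≤ Cardinal.mk X := by
    rw [hBmk]; exact h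
  obtain ⟨ι⟩ := Cardinal.le_def _ _ |>.mp hle
  obtain ⟨f₀, hf₀, -⟩ := hBu (fun _ => 0)
  haveI : Nonempty ↥B := ⟨⟨f₀, hf₀⟩⟩
  set h' : X → ℕ → ℕ := fun x => ((Function.invFun ι x : ↥B) : ℕ → ℕ) with hh'
  have hinv : ∀ b : ↥B, h' (ι b) = (b : ℕ → ℕ) := fun b => by
    simp [hh', Function.leftInverse_invFun ι.injective b]
  set A : ℕ → ℕ → Set X := fun n k => {x | h' x n ≤ k} with hA
  refine ⟨fun n => {S | ∃ M ∈ 𝒩, ∃ k, S = M ∩ A n k}, fun n => ⟨?_, ?_⟩, ?_⟩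
  · -- countable
    dsimp only
    have : {S | ∃ M ∈ 𝒩, ∃ k, S = M ∩ A n k}
        = Set.image2 (fun M k => M ∩ A n k) 𝒩 (Set.univ : Set ℕ) := by
      ext S
      simp only [Set.mem_image2, Set.mem_univ, true_and, Set.mem_setOf_eq]
      constructor
      · rintro ⟨M, hM, k, rfl⟩; exact ⟨M, hM, k, rfl⟩
      · rintro ⟨M, hM, k, rfl⟩; exact ⟨M, hM, k, rfl⟩
    rw [this]
    exact Set.Countable.image2 h𝒩c Set.countable_univ _
  · -- network
    intro x U hU hxU
    obtain ⟨M, hM, hxM, hMU⟩ := h𝒩 x U hU hxU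
    exact ⟨M ∩ A n (h' x n), ⟨M, hM, h' x n, rfl⟩, ⟨hxM, show h' x n ≤ h' x n from le_rfl⟩,
      Set.inter_subset_left.trans hMU⟩
  · intro F hF
    have hg : ∀ n, ∃ m, ∀ S ∈ F n, ∀ x ∈ S, h' x n ≤ m := by
      intro n
      set κ : Set X → ℕ := fun S => sInf {k | ∀ x ∈ S, h' x n ≤ k} with hκ
      have hκS : ∀ S ∈ F n, ∀ x ∈ S, h' x n ≤ κ S := by
        intro S hS
        obtain ⟨M, _, k, rfl⟩ := (hF n).1 hS
        have hne' : {k' | ∀ x ∈ M ∩ A n k, h' x n ≤ k'}.Nonempty :=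
          ⟨k, fun x hx => hx.2⟩
        exact Nat.sInf_mem hne'
      have hfin : (κ '' F n).Finite := (hF n).2.image κ
      obtain ⟨m, hm⟩ := hfin.bddAbove
      exact ⟨m, fun S hS x hx => (hκS S hS x hx).trans (hm ⟨S, hS, rfl⟩)⟩
    choose g hg using hg
    obtain ⟨f, hfB, hfnb⟩ := hBu g
    refine ⟨ι ⟨f, hfB⟩, Set.univ, isOpen_univ, trivial, ?_⟩
    have hyf : h' (ι ⟨f, hfB⟩) = f := hinv ⟨f, hfB⟩
    have hinf : {n | g n < f n}.Infinite := by
      have hfreq : ∃ᶠ n in atTop, ¬ f n ≤ g n := Filter.not_eventually.mp hfnb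
      have := Nat.frequently_atTop_iff_infinite.mp hfreq
      exact this.mono (fun n hn => not_le.mp hn)
    refine hinf.mono (fun n hn => ?_)
    rintro ⟨S, hS, hyS, -⟩
    have := hg n S hS _ hyS
    rw [hyf] at this
    exact absurd this (not_le.mpr hn)
end

section
/- Let X be a topological space with a countable network and weight strictly less than 𝔡. Then X is M-nw-selective if and only if |X| < 𝔡. -/
open Set Filter Topology TopologicalSpace

open Cardinal

lemma dom_spec : ∃ D : Set (ℕ → ℕ), Cardinal.mk D = dominatingNumber ∧
    ∀ g : ℕ → ℕ, ∃ f ∈ D, ∀ᶠ n in atTop, g n ≤ f n := by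
  have hne : {c | ∃ D : Set (ℕ → ℕ), Cardinal.mk D = c ∧
      ∀ g : ℕ → ℕ, ∃ f ∈ D, ∀ᶠ n in atTop, g n ≤ f n}.Nonempty :=
    ⟨_, Set.univ, rfl, fun g => ⟨g, trivial, Eventually.of_forall fun _ => le_rfl⟩⟩
  exact csInf_mem hne

lemma dom_le (D : Set (ℕ → ℕ)) (h : ∀ g : ℕ → ℕ, ∃ f ∈ D, ∀ᶠ n in atTop, g n ≤ f n) :
    dominatingNumber ≤ Cardinal.mk D :=
  csInf_le' ⟨D, rfl, h⟩

lemma aleph0_lt_dom : ℵ₀ < dominatingNumber := by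
  obtain ⟨D, hmk, hdom⟩ := dom_spec
  rw [← hmk]
  by_contra hle
  push_neg at hle
  have hc : D.Countable := by
    rwa [← Set.countable_coe_iff, ← Cardinal.mk_le_aleph0_iff]
  have hne : D.Nonempty := by
    obtain ⟨f, hf, -⟩ := hdom 0
    exact ⟨f, hf⟩
  obtain ⟨e, he⟩ := hc.exists_eq_range hne
  set g : ℕ → ℕ := fun n => (Finset.range (n + 1)).sup (fun k => e k n) + 1 with hg
  obtain ⟨f, hfD, hev⟩ := hdom g
  rw [he] at hfD
  obtain ⟨k, rfl⟩ := hfD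
  rw [eventually_atTop] at hev
  obtain ⟨N, hN⟩ := hev
  have h1 : g (max N k) ≤ e k (max N k) := hN _ (le_max_left _ _)
  have h2 : e k (max N k) + 1 ≤ g (max N k) := by
    have : e k (max N k) ≤ (Finset.range (max N k + 1)).sup (fun j => e j (max N k)) :=
      Finset.le_sup (f := fun j => e j (max N k)) (Finset.mem_range.mpr (Nat.lt_succ_of_le (le_max_right N k)))
    simpa [hg] using Nat.add_le_add_right this 1
  omega

lemma weight'_spec (X : Type) [TopologicalSpace X] :
    ∃ B : Set (Set X), Cardinal.mk B = weight' X ∧ TopologicalSpace.IsTopologicalBasis B := by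
  have hne : {c | ∃ B : Set (Set X), Cardinal.mk B = c ∧
      TopologicalSpace.IsTopologicalBasis B}.Nonempty :=
    ⟨_, ⟨{s : Set X | IsOpen s}, rfl, isTopologicalBasis_opens⟩⟩
  exact csInf_mem hne

lemma M_of_lt (X : Type) [TopologicalSpace X] (h1 : HasCountableNetwork X)
    (h3 : weight' X < dominatingNumber) (hX : Cardinal.mk X < dominatingNumber) :
    MNwSelective X := by
  refine ⟨h1, ?_⟩
  intro N hN
  by_cases hne : Nonempty X
  swap
  · exact ⟨fun _ => ∅, fun n => ⟨empty_subset _, finite_empty⟩,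
      fun x => (hne ⟨x⟩).elim⟩
  obtain ⟨x₀⟩ := hne
  obtain ⟨B, hBmk, hB⟩ := weight'_spec X
  -- enumerate each network
  have hA : ∀ n, ∃ A : ℕ → Set X, N n = Set.range A := by
    intro n
    refine (hN n).1.exists_eq_range ?_
    obtain ⟨S, hS, -, -⟩ := (hN n).2 x₀ univ isOpen_univ trivial
    exact ⟨S, hS⟩
  choose A hA using hA
  classical
  -- the key functions
  set f : X → Set X → ℕ → ℕ := fun x U n =>
    if h : ∃ k, x ∈ A n k ∧ A n k ⊆ U then h.choose else 0 with hf
  set Dfam : Set (ℕ → ℕ) := Set.range (fun q : X × ↥B => f q.1 (q.2 : Set X)) with hDfam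
  have hDlt : Cardinal.mk Dfam < dominatingNumber := by
    calc Cardinal.mk Dfam ≤ Cardinal.mk (X × ↥B) := Cardinal.mk_range_le
    _ = Cardinal.mk X * Cardinal.mk ↥B := by
        simp [Cardinal.mk_prod, Cardinal.lift_id]
    _ < dominatingNumber := by
        apply Cardinal.mul_lt_of_lt aleph0_lt_dom.le hX
        rw [hBmk]; exact h3
  have hnotdom : ∃ g : ℕ → ℕ, ∀ f' ∈ Dfam, ¬ ∀ᶠ n in atTop, g n ≤ f' n := by
    by_contra h
    push_neg at h
    exact absurd (dom_le Dfam h) (not_le.mpr hDlt)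
  obtain ⟨g, hg⟩ := hnotdom
  refine ⟨fun n => (A n) '' (Set.Iio (g n)), fun n => ⟨?_, (Set.finite_Iio _).image _⟩, ?_⟩
  · rw [hA n]; exact Set.image_subset_range _ _
  · intro x U hU hx
    obtain ⟨V, hVB, hxV, hVU⟩ := hB.exists_subset_of_mem_open hx hU
    have hfmem : f x V ∈ Dfam := ⟨(x, ⟨V, hVB⟩), rfl⟩
    obtain ⟨n, hn⟩ := (Filter.not_eventually.mp (hg _ hfmem)).exists
    push_neg at hn
    have hex : ∃ k, x ∈ A n k ∧ A n k ⊆ V := by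
      obtain ⟨S, hS, hxS, hSV⟩ := (hN n).2 x V (hB.isOpen hVB) hxV
      rw [hA n] at hS
      obtain ⟨k, rfl⟩ := hS
      exact ⟨k, hxS, hSV⟩
    have hfeq : f x V n = hex.choose := by simp only [hf]; exact dif_pos hex
    refine ⟨A n hex.choose, ?_, hex.choose_spec.1, hex.choose_spec.2.trans hVU⟩
    exact Set.mem_iUnion.mpr ⟨n, Set.mem_image_of_mem _ (by rw [Set.mem_Iio, ← hfeq]; exact hn)⟩

lemma not_M_of_ge (X : Type) [TopologicalSpace X] (h1 : HasCountableNetwork X)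
    (hX : dominatingNumber ≤ Cardinal.mk X) : ¬ MNwSelective X := by
  classical
  obtain ⟨Nw, hNwc, hNw⟩ := h1
  obtain ⟨D, hDmk, hDdom⟩ := dom_spec
  -- X is nonempty
  have hXne : Nonempty X := by
    rw [← Cardinal.mk_ne_zero_iff]
    intro h0
    rw [h0] at hX
    exact absurd (aleph0_lt_dom.trans_le hX) (by simp)
  obtain ⟨x₀⟩ := hXne
  -- enumerate the countable network
  have hNwne : Nw.Nonempty := by
    obtain ⟨S, hS, -, -⟩ := hNw x₀ univ isOpen_univ trivial
    exact ⟨S, hS⟩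
  obtain ⟨M, hM⟩ := hNwc.exists_eq_range hNwne
  -- the strongly exceeding family indexed by ↥D × ℕ
  set ψ : ↥D × ℕ → ℕ → ℕ := fun p n => (p.1 : ℕ → ℕ) n + p.2 with hψ
  have hstrong : ∀ g : ℕ → ℕ, ∃ p : ↥D × ℕ, ∀ n, g n ≤ ψ p n := by
    intro g
    obtain ⟨f, hfD, hev⟩ := hDdom g
    rw [eventually_atTop] at hev
    obtain ⟨K, hK⟩ := hev
    refine ⟨(⟨f, hfD⟩, (Finset.range K).sup g), fun n => ?_⟩
    rcases lt_or_ge n K with h | h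
    · have : g n ≤ (Finset.range K).sup g := Finset.le_sup (Finset.mem_range.mpr h)
      simp only [hψ]
      omega
    · have := hK n h
      simp only [hψ]
      omega
  -- an injection of ↥D × ℕ into X
  have hcard : Cardinal.mk (↥D × ℕ) ≤ Cardinal.mk X := by
    have h1 : Cardinal.mk (↥D × ℕ) = Cardinal.mk ↥D * ℵ₀ := by
      simp [Cardinal.mk_prod, Cardinal.lift_id]
    have h2 : Cardinal.mk ↥D * ℵ₀ = Cardinal.mk ↥D := by
      rw [Cardinal.mul_eq_max (by rw [hDmk]; exact aleph0_lt_dom.le) le_rfl]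
      exact max_eq_left (by rw [hDmk]; exact aleph0_lt_dom.le)
    rw [h1, h2, hDmk]
    exact hX
  obtain ⟨ι⟩ := Cardinal.le_def _ _ |>.mp hcard
  -- the "level" sets
  set B : ℕ → ℕ → Set X := fun n j => {x | ∃ p, ι p = x ∧ ψ p n = j} with hB
  set N : ℕ → Set (Set X) := fun n =>
    Set.range (fun q : ℕ × Option ℕ =>
      M q.1 ∩ (Option.elim q.2 (Set.range ι)ᶜ (fun j => B n j))) with hNdef
  have hNgood : ∀ n, (N n).Countable ∧ IsNetwork X (N n) := by
    intro n
    constructor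
    · exact Set.countable_range _
    · intro x U hU hx
      obtain ⟨S, hS, hxS, hSU⟩ := hNw x U hU hx
      rw [hM] at hS
      obtain ⟨k, rfl⟩ := hS
      by_cases hxr : x ∈ Set.range ι
      · obtain ⟨p, rfl⟩ := hxr
        refine ⟨M k ∩ B n (ψ p n), ⟨(k, some (ψ p n)), rfl⟩,
          ⟨hxS, p, rfl, rfl⟩, (Set.inter_subset_left).trans hSU⟩
      · exact ⟨M k ∩ (Set.range ι)ᶜ, ⟨(k, none), rfl⟩, ⟨hxS, hxr⟩,
          (Set.inter_subset_left).trans hSU⟩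
  intro hMS
  obtain ⟨F, hF, hFnet⟩ := hMS.2 N hNgood
  -- extract chosen indices
  set jval : ℕ → Set X → ℕ := fun n A =>
    if h : ∃ j, ∃ k, A = M k ∩ B n j then h.choose else 0 with hjval
  set g : ℕ → ℕ := fun n => ((hF n).2.toFinset.sup (jval n)) + 1 with hg
  obtain ⟨p, hp⟩ := hstrong g
  obtain ⟨A, hAmem, hxA, -⟩ := hFnet (ι p) univ isOpen_univ trivial
  obtain ⟨n, hAn⟩ := Set.mem_iUnion.mp hAmem
  have hAN : A ∈ N n := (hF n).1 hAn
  obtain ⟨⟨k, o⟩, hAeq⟩ := hAN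
  cases o with
  | none =>
    simp only [Option.elim] at hAeq
    rw [← hAeq] at hxA
    exact hxA.2 ⟨p, rfl⟩
  | some j =>
    simp only [Option.elim] at hAeq
    have hex : ∃ j, ∃ k, A = M k ∩ B n j := ⟨j, k, hAeq.symm⟩
    obtain ⟨k', hk'⟩ := hex.choose_spec
    have hjv : jval n A = hex.choose := by simp only [hjval]; exact dif_pos hex
    -- x ∈ A = M k' ∩ B n (jval n A)
    rw [hk'] at hxA
    obtain ⟨-, q, hq1, hq2⟩ := hxA
    have hqp : q = p := ι.injective hq1
    subst hqp
    -- so ψ p n = hex.choose = jval n A ≤ sup < g n ≤ ψ p n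
    have hle : jval n A ≤ (hF n).2.toFinset.sup (jval n) :=
      Finset.le_sup ((hF n).2.mem_toFinset.mpr hAn)
    have hgn := hp n
    simp only [hg] at hgn
    omega

theorem stmt6 (X : Type) [TopologicalSpace X]
    (h1 : HasCountableNetwork X)
    (h3 : weight' X < dominatingNumber) :
    MNwSelective X ↔ Cardinal.mk X < dominatingNumber := by
  constructor
  · intro hM
    by_contra h
    exact not_M_of_ge X h1 (le_of_not_gt h) hM
  · intro hX
    exact M_of_lt X h1 h3 hX
end

section
/- If F ⊆ ω^ω has cardinality strictly less than cov(ℳ), then there exists g ∈ ω^ω such that for every f ∈ F, the set {n ∈ ω : f(n) = g(n)} is infinite. -/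
open Set Filter Topology TopologicalSpace

/-!
Enumerate ℚ so that every rational is `center n` for infinitely many `n`, and let `guess x n`
read off `1 / (x - center n)`: on the interval `(c + 1/(N+1), c + 1/N)` to the right of
`c = center n`, where `N = m + n + 1`, it takes the value `m`, and this interval lies within
`1/(n+1)` of `c`. Hence for a fixed `f`, every open interval contains, for arbitrarily large `n`,
a subinterval on which `guess · n = f n`; so the reals `x` for which `guess x` agrees with `f`
infinitely often form a dense `G_δ`, and the `x` for which it does not form a meagre set.
If no `g` worked for `F`, these meagre sets, one for each `f ∈ F`, would cover `ℝ`
with fewer than `cov(ℳ)` sets.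
-/

namespace CovMeager

noncomputable def center (n : ℕ) : ℝ := (Denumerable.eqv ℚ).symm n.unpair.1

theorem frequently_center_mem_Ioo {a b : ℝ} (hab : a < b) :
    ∃ᶠ n in atTop, center n ∈ Ioo a b := by
  obtain ⟨q, haq, hqb⟩ := exists_rat_btwn hab
  refine frequently_atTop.2 fun k => ⟨Nat.pair (Denumerable.eqv ℚ q) k, Nat.right_le_pair _ _, ?_⟩
  rw [center, Nat.unpair_pair, Equiv.symm_apply_apply]
  exact ⟨haq, hqb⟩

noncomputable def guess (x : ℝ) (n : ℕ) : ℕ := ⌊(x - center n)⁻¹⌋₊ - (n + 1)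

theorem natFloor_inv_eq_of_mem_Ioo {N : ℕ} (hN : 0 < N) {t : ℝ}
    (ht : t ∈ Ioo (N + 1 : ℝ)⁻¹ (N : ℝ)⁻¹) : ⌊t⁻¹⌋₊ = N := by
  have hN' : (0 : ℝ) < N := by exact_mod_cast hN
  have ht0 : 0 < t := (inv_pos.2 (by positivity)).trans ht.1
  rw [Nat.floor_eq_iff (inv_pos.2 ht0).le]
  exact ⟨(le_inv_comm₀ ht0 hN').1 ht.2.le,
    (inv_lt_comm₀ ht0 (by positivity : (0 : ℝ) < N + 1)).2 ht.1⟩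

theorem guess_eq_of_mem_Ioo {n m : ℕ} {x : ℝ}
    (hx : x - center n ∈ Ioo (m + n + 2 : ℝ)⁻¹ (m + n + 1 : ℝ)⁻¹) : guess x n = m := by
  have hfloor : ⌊(x - center n)⁻¹⌋₊ = m + n + 1 :=
    natFloor_inv_eq_of_mem_Ioo (by omega) (by convert hx using 3 <;> push_cast <;> ring)
  rw [guess, hfloor]
  omega

theorem exists_mem_Ioo_mem_interior_guess_eq (f : ℕ → ℕ) (k : ℕ) {a b : ℝ} (hab : a < b) :
    ∃ y ∈ Ioo a b, ∃ n ≥ k, y ∈ interior {x | guess x n = f n} := by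
  have hsmall : ∀ᶠ n : ℕ in atTop, k ≤ n ∧ ((n : ℝ) + 1)⁻¹ < (b - a) / 2 :=
    (eventually_ge_atTop k).and
      (tendsto_inv_atTop_zero.comp (tendsto_natCast_atTop_atTop.atTop_add tendsto_const_nhds)
        |>.eventually (gt_mem_nhds (by linarith)))
  obtain ⟨n, ⟨hac, hcb⟩, hkn, hn⟩ :=
    ((frequently_center_mem_Ioo (by linarith : a < (a + b) / 2)).and_eventually hsmall).exists
  set c := center n
  set lo : ℝ := (f n + n + 2 : ℝ)⁻¹
  set hi : ℝ := (f n + n + 1 : ℝ)⁻¹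
  have hlohi : lo < hi := inv_strictAnti₀ (by positivity) (by linarith)
  have hhi : hi ≤ ((n : ℝ) + 1)⁻¹ :=
    inv_anti₀ (by positivity) (by linarith [(f n).cast_nonneg (α := ℝ)])
  have hsub : Ioo (c + lo) (c + hi) ⊆ {x | guess x n = f n} := fun x hx =>
    guess_eq_of_mem_Ioo ⟨by linarith [hx.1], by linarith [hx.2]⟩
  refine ⟨c + (lo + hi) / 2, ⟨?_, ?_⟩, n, hkn, interior_maximal hsub isOpen_Ioo ⟨?_, ?_⟩⟩ <;>
    linarith [inv_pos.2 (by positivity : (0 : ℝ) < f n + n + 2)]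

theorem isMeagre_setOf_finite_eq_guess (f : ℕ → ℕ) :
    IsMeagre {x : ℝ | {n | f n = guess x n}.Finite} := by
  have hopen : ∀ k, IsOpen (⋃ n ≥ k, interior {x | guess x n = f n}) := fun k =>
    isOpen_biUnion fun _ _ => isOpen_interior
  have hdense : ∀ k, Dense (⋃ n ≥ k, interior {x | guess x n = f n}) := fun k =>
    dense_of_exists_between fun a b hab => by
      obtain ⟨y, hy, n, hkn, hyn⟩ := exists_mem_Ioo_mem_interior_guess_eq f k hab
      exact ⟨y, mem_biUnion hkn hyn, hy⟩
  refine mem_of_superset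
    (countable_iInter_mem.2 fun k => residual_of_dense_open (hopen k) (hdense k)) fun x hx => ?_
  refine Set.not_finite.2 (Nat.frequently_atTop_iff_infinite.1 (frequently_atTop.2 fun k => ?_))
  obtain ⟨n, hkn, hn⟩ := mem_iUnion₂.1 (mem_iInter.1 hx k)
  exact ⟨n, hkn, (interior_subset (s := {x | guess x n = f n}) hn).symm⟩

theorem covMeager_le_mk {ι : Type} (s : ι → Set ℝ) (hs : ∀ i, IsMeagre (s i))
    (hcover : ⋃ i, s i = univ) : covMeager ≤ Cardinal.mk ι :=
  (csInf_le' ⟨range s, rfl, forall_mem_range.2 hs, by rwa [sUnion_range]⟩ :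
    covMeager ≤ Cardinal.mk (range s)).trans Cardinal.mk_range_le

end CovMeager

open CovMeager in
theorem stmt10 (F : Set (ℕ → ℕ)) (h : Cardinal.mk F < covMeager) :
    ∃ g : ℕ → ℕ, ∀ f ∈ F, {n : ℕ | f n = g n}.Infinite := by
  by_contra! hcon
  have hcover : ⋃ f : F, {x : ℝ | {n | f.1 n = guess x n}.Finite} = univ :=
    eq_univ_of_forall fun x => by
      obtain ⟨f, hf, hfin⟩ := hcon (guess x)
      exact mem_iUnion.2 ⟨⟨f, hf⟩, hfin⟩
  exact h.not_ge (covMeager_le_mk _ (fun f => isMeagre_setOf_finite_eq_guess f.1) hcover)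
end

section
/- If a topological space X is M-nw-selective, then X is locally M-nw-selective. The same holds for H-nw-selective and R-nw-selective in place of M-nw-selective. -/
open Set Filter Topology TopologicalSpace

def LocallyMNwSelective (X : Type) [TopologicalSpace X] : Prop :=
  ∀ (x : X) (N : ℕ → Set (Set X)), (∀ n, (N n).Countable ∧ IsNetworkAt X (N n) x) →
    ∃ L : ℕ → Set (Set X), (∀ n, L n ⊆ N n ∧ (L n).Finite) ∧
      IsNetworkAt X (⋃ n, L n) x

def LocallyHNwSelective (X : Type) [TopologicalSpace X] : Prop :=
  ∀ (x : X) (N : ℕ → Set (Set X)), (∀ n, (N n).Countable ∧ IsNetworkAt X (N n) x) →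
    ∃ L : ℕ → Set (Set X), (∀ n, L n ⊆ N n ∧ (L n).Finite) ∧
      ∀ I : Set ℕ, I.Infinite → IsNetworkAt X (⋃ n ∈ I, L n) x

def LocallyRNwSelective (X : Type) [TopologicalSpace X] : Prop :=
  ∀ (x : X) (N : ℕ → Set (Set X)), (∀ n, (N n).Countable ∧ IsNetworkAt X (N n) x) →
    ∃ s : ℕ → Set X, (∀ n, s n ∈ N n) ∧ IsNetworkAt X (Set.range s) x


lemma combineNet (X : Type) [TopologicalSpace X] (M : Set (Set X)) (hMc : M.Countable)
    (hM : IsNetwork X M) (x : X) (N : Set (Set X)) (hNc : N.Countable)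
    (hN : IsNetworkAt X N x) :
    (N ∪ (fun A => A \ {x}) '' M).Countable ∧ IsNetwork X (N ∪ (fun A => A \ {x}) '' M) := by
  refine ⟨hNc.union (hMc.image _), ?_⟩
  intro y U hU hyU
  by_cases hyx : y = x
  · subst hyx
    obtain ⟨A, hA, h1, h2⟩ := hN U hU hyU
    exact ⟨A, Or.inl hA, h1, h2⟩
  · obtain ⟨A, hA, h1, h2⟩ := hM y U hU hyU
    exact ⟨A \ {x}, Or.inr ⟨A, hA, rfl⟩, ⟨h1, hyx⟩, Set.diff_subset.trans h2⟩

theorem stmt12 (X : Type) [TopologicalSpace X] :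
    (MNwSelective X → LocallyMNwSelective X) ∧
    (HNwSelective X → LocallyHNwSelective X) ∧
    (RNwSelective X → LocallyRNwSelective X) := by
  refine ⟨?_, ?_, ?_⟩
  · rintro ⟨⟨M, hMc, hM⟩, hsel⟩ x N hN
    set N' : ℕ → Set (Set X) := fun n => N n ∪ (fun A => A \ {x}) '' M with hN'
    obtain ⟨F, hF, hFnet⟩ := hsel N' (fun n => combineNet X M hMc hM x (N n) (hN n).1 (hN n).2)
    refine ⟨fun n => F n ∩ N n, fun n => ⟨Set.inter_subset_right, (hF n).2.subset Set.inter_subset_left⟩, ?_⟩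
    intro U hU hxU
    obtain ⟨A, hA, hxA, hAU⟩ := hFnet x U hU hxU
    obtain ⟨n, hn⟩ := Set.mem_iUnion.1 hA
    have hA' : A ∈ N n := by
      rcases (hF n).1 hn with h | ⟨B, _, rfl⟩
      · exact h
      · exact absurd hxA (by simp)
    exact ⟨A, Set.mem_iUnion.2 ⟨n, ⟨hn, hA'⟩⟩, hxA, hAU⟩
  · rintro ⟨⟨M, hMc, hM⟩, hsel⟩ x N hN
    set N' : ℕ → Set (Set X) := fun n => N n ∪ (fun A => A \ {x}) '' M with hN'
    obtain ⟨F, hF, hFnet⟩ := hsel N' (fun n => combineNet X M hMc hM x (N n) (hN n).1 (hN n).2)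
    refine ⟨fun n => F n ∩ N n, fun n => ⟨Set.inter_subset_right, (hF n).2.subset Set.inter_subset_left⟩, ?_⟩
    intro I hI U hU hxU
    obtain ⟨k, hk⟩ := hFnet x U hU hxU
    obtain ⟨n, hnI, hnk⟩ := hI.exists_gt k
    obtain ⟨A, hA, hxA, hAU⟩ := hk n hnk.le
    have hA' : A ∈ N n := by
      rcases (hF n).1 hA with h | ⟨B, _, rfl⟩
      · exact h
      · exact absurd hxA (by simp)
    exact ⟨A, Set.mem_iUnion₂.2 ⟨n, hnI, hA, hA'⟩, hxA, hAU⟩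
  · rintro ⟨⟨M, hMc, hM⟩, hsel⟩ x N hN
    classical
    set N' : ℕ → Set (Set X) := fun n => N n ∪ (fun A => A \ {x}) '' M with hN'
    obtain ⟨s, hs, hsnet⟩ := hsel N' (fun n => combineNet X M hMc hM x (N n) (hN n).1 (hN n).2)
    have hne : ∀ n, (N n).Nonempty := by
      intro n
      obtain ⟨A, hA, -⟩ := (hN n).2 Set.univ isOpen_univ (Set.mem_univ x)
      exact ⟨A, hA⟩
    choose a ha using hne
    set s' : ℕ → Set X := fun n => if s n ∈ N n then s n else a n with hs'
    refine ⟨s', fun n => by by_cases h : s n ∈ N n <;> simp [hs', h, ha n], ?_⟩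
    intro U hU hxU
    obtain ⟨A, hA, hxA, hAU⟩ := hsnet x U hU hxU
    obtain ⟨n, rfl⟩ := hA
    have h : s n ∈ N n := by
      rcases hs n with h | ⟨B, _, hB⟩
      · exact h
      · rw [← hB] at hxA; exact absurd hxA (by simp)
    exact ⟨s n, ⟨n, by simp [hs', h]⟩, hxA, hAU⟩
end

section
/- If X ⊆ 2^λ is an HFD space and 𝒩 is a countable network for X, then the subfamily 𝒩 ∩ [X]^{<ω} of finite elements of 𝒩 is also a network for X; consequently every HFD space with a countable network is countable. -/
open Set Filter Topology TopologicalSpace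

def IsHFD {L : Type} (X : Set (L → Bool)) : Prop :=
  X.Infinite ∧ ∀ A : Set (L → Bool), A ⊆ X → A.Countable → A.Infinite →
    ∃ B : Set L, B.Countable ∧
      ∀ (s : Finset L) (e : L → Bool), (↑s : Set L) ⊆ Bᶜ →
        ∃ a ∈ A, ∀ i ∈ s, a i = e i

lemma key {L : Type} {X : Set (L → Bool)} (hX : IsHFD X) (A : Set ↥X) (hA : A.Infinite) :
    ∃ B : Set L, B.Countable ∧ ∀ i ∉ B, ∀ b : Bool, ∃ a ∈ A, (a : ↥X).val i = b := by
  have e := hA.natEmbedding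
  set g : ℕ → (L → Bool) := fun n => ((e n : ↥X) : L → Bool) with hg
  have hginj : Function.Injective g := by
    intro m n h
    exact e.injective (Subtype.ext (Subtype.ext h))
  have hsub : Set.range g ⊆ X := by
    rintro _ ⟨n, rfl⟩; exact ((e n : ↥X)).2
  obtain ⟨B, hBc, hBd⟩ := hX.2 (Set.range g) hsub (countable_range g)
    (infinite_range_of_injective hginj)
  refine ⟨B, hBc, fun i hi b => ?_⟩
  obtain ⟨a, ⟨n, rfl⟩, ha⟩ := hBd {i} (fun _ => b) (by simpa using hi)
  exact ⟨(e n : ↥X), (e n).2, ha i (Finset.mem_singleton_self i)⟩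

open Classical in
noncomputable def Bfun {L : Type} {X : Set (L → Bool)} (hX : IsHFD X) (A : Set ↥X) : Set L :=
  if h : A.Infinite then (key hX A h).choose else ∅

lemma Bfun_countable {L : Type} {X : Set (L → Bool)} (hX : IsHFD X) (A : Set ↥X) :
    (Bfun hX A).Countable := by
  unfold Bfun
  classical
  split
  · exact (key hX A ‹_›).choose_spec.1
  · exact countable_empty

lemma Bfun_dense {L : Type} {X : Set (L → Bool)} (hX : IsHFD X) (A : Set ↥X)
    (h : A.Infinite) (i : L) (hi : i ∉ Bfun hX A) (b : Bool) :
    ∃ a ∈ A, (a : ↥X).val i = b := by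
  unfold Bfun at hi
  rw [dif_pos h] at hi
  exact (key hX A h).choose_spec.2 i hi b

theorem stmt15 (L : Type) [Uncountable L] (X : Set (L → Bool)) (hX : IsHFD X)
    (N : Set (Set ↥X)) (hc : N.Countable) (hn : IsNetwork ↥X N) :
    IsNetwork ↥X {A ∈ N | A.Finite} ∧ X.Countable := by
  have hnet : IsNetwork ↥X {A ∈ N | A.Finite} := by
    intro x U hU hxU
    obtain ⟨V, hV, rfl⟩ := isOpen_induced_iff.mp hU
    rw [isOpen_pi_iff] at hV
    obtain ⟨I, u, hu, hW⟩ := hV x.val hxU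
    set W : Set (L → Bool) := (I : Set L).pi u with hWdef
    have hxW : x.val ∈ W := fun i hi => (hu i hi).2
    -- the family of bad (infinite) candidates
    set F : Set (Set ↥X) := {A ∈ N | A ⊆ Subtype.val ⁻¹' W ∧ A.Infinite} with hF
    have hFc : F.Countable := hc.mono (sep_subset _ _)
    have hBtot : (⋃ A ∈ F, Bfun hX A).Countable :=
      hFc.biUnion (fun A _ => Bfun_countable hX A)
    obtain ⟨i, hi⟩ : ∃ i, i ∉ ⋃ A ∈ F, Bfun hX A := by
      by_contra h
      push_neg at h
      have : (univ : Set L).Countable := by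
        refine hBtot.mono ?_
        intro j _; exact h j
      exact (not_countable_univ) this
    set V' : Set (L → Bool) := W ∩ ((fun g => g i) ⁻¹' {x.val i}) with hV'
    have hV'open : IsOpen V' := by
      refine IsOpen.inter (isOpen_set_pi I.finite_toSet (fun j hj => (hu j hj).1)) ?_
      exact (continuous_apply i).isOpen_preimage _ (isOpen_discrete _)
    have hxV' : x.val ∈ V' := ⟨hxW, rfl⟩
    obtain ⟨A, hAN, hxA, hAsub⟩ := hn x (Subtype.val ⁻¹' V')
      (hV'open.preimage continuous_subtype_val) hxV'
    have hAfin : A.Finite := by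
      by_contra hinf
      have hAF : A ∈ F := ⟨hAN, fun a ha => (hAsub ha).1, hinf⟩
      have hiA : i ∉ Bfun hX A := fun h => hi (mem_biUnion hAF h)
      obtain ⟨a, haA, hab⟩ := Bfun_dense hX A hinf i hiA (!(x.val i))
      have : a.val i = x.val i := (hAsub haA).2
      simp [this] at hab
    exact ⟨A, ⟨hAN, hAfin⟩, hxA, fun a ha => hW (hAsub ha).1⟩
  refine ⟨hnet, ?_⟩
  have : (univ : Set ↥X).Countable := by
    have hsub : (univ : Set ↥X) ⊆ ⋃ A ∈ {A ∈ N | A.Finite}, A := by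
      intro x _
      obtain ⟨A, hA, hxA, _⟩ := hnet x univ isOpen_univ (mem_univ x)
      exact mem_biUnion hA hxA
    exact ((hc.mono (sep_subset _ _)).biUnion (fun A hA => hA.2.countable)).mono hsub
  rw [← countable_coe_iff]
  exact countable_univ_iff.mp this
end

section
/- Let X be a metrizable separable zero-dimensional space and 𝒮 a countable clopen base of X closed under finite unions and complements; let Y_𝒮 = {χ_S : S ∈ 𝒮} ⊆ C_p(X, 2), where χ_S is the characteristic function of S. If Y_𝒮 is H-nw-selective, then for every sequence (𝒞ₙ : n ∈ ω) of countable closed ω-covers of X there exist finite 𝒟ₙ ⊆ 𝒞ₙ forming a γ_fs-sequence on X: for every finite F ⊆ X, for all but finitely many n there exists D ∈ 𝒟ₙ with F ⊆ D. -/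
open Set Filter Topology TopologicalSpace

attribute [local instance] Classical.propDecidable

noncomputable def chi {A : Type} (S : Set A) : A → Bool := fun x => decide (x ∉ S)

noncomputable def ZcSet {X : Type} (S : Set (Set X)) (c : Set X) :
    Set ↥(chi '' S : Set (X → Bool)) :=
  {f | ∀ x ∈ c, (f : X → Bool) x = false}

theorem stmt17 (X : Type) [TopologicalSpace X]
    [TopologicalSpace.MetrizableSpace X] [TopologicalSpace.SeparableSpace X]
    (S : Set (Set X)) (hSc : S.Countable) (hclopen : ∀ s ∈ S, IsClopen s)
    (hbase : TopologicalSpace.IsTopologicalBasis S)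
    (hunion : ∀ s ∈ S, ∀ t ∈ S, s ∪ t ∈ S) (hcompl : ∀ s ∈ S, sᶜ ∈ S)
    (hH : HNwSelective ↥(chi '' S : Set (X → Bool))) :
    ∀ C : ℕ → Set (Set X),
      (∀ n, (C n).Countable ∧ (∀ c ∈ C n, IsClosed c) ∧
        (∀ F : Set X, F.Finite → ∃ c ∈ C n, F ⊆ c)) →
      ∃ D : ℕ → Set (Set X), (∀ n, D n ⊆ C n ∧ (D n).Finite) ∧
        ∀ F : Set X, F.Finite → ∀ᶠ n in atTop, ∃ d ∈ D n, F ⊆ d := by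
  intro C hC
  by_cases hX : Nonempty X
  swap
  · refine ⟨fun n => {((hC n).2.2 ∅ finite_empty).choose}, fun n =>
      ⟨singleton_subset_iff.2 ((hC n).2.2 ∅ finite_empty).choose_spec.1, finite_singleton _⟩, ?_⟩
    intro F _
    exact Eventually.of_forall fun n =>
      ⟨_, mem_singleton _, fun x _ => absurd ⟨x⟩ hX⟩
  obtain ⟨x0⟩ := hX
  obtain ⟨s0, hs0S, -, -⟩ := hbase.exists_subset_of_mem_open (mem_univ x0) isOpen_univ
  have huniv : (univ : Set X) ∈ S := by
    have h := hunion s0 hs0S s0ᶜ (hcompl s0 hs0S)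
    rwa [union_compl_self] at h
  have hzmem : chi (univ : Set X) ∈ (chi '' S : Set (X → Bool)) := ⟨univ, huniv, rfl⟩
  set z : ↥(chi '' S : Set (X → Bool)) := ⟨chi univ, hzmem⟩ with hzdef
  have hzval : ∀ x : X, (z : X → Bool) x = false := by
    intro x; simp [hzdef, chi]
  have hzZc : ∀ c, z ∈ ZcSet S c := fun c x _ => hzval x
  have hopen : ∀ G : Set X, G.Finite →
      IsOpen {f : ↥(chi '' S : Set (X → Bool)) | ∀ x ∈ G, (f : X → Bool) x = false} := by
    intro G hG
    have heq : {f : ↥(chi '' S : Set (X → Bool)) | ∀ x ∈ G, (f : X → Bool) x = false}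
        = ⋂ x ∈ G, (fun f : ↥(chi '' S : Set (X → Bool)) => (f : X → Bool) x) ⁻¹' {false} := by
      ext f; simp
    rw [heq]
    exact hG.isOpen_biInter fun x _ =>
      IsOpen.preimage ((continuous_apply x).comp continuous_subtype_val) (isOpen_discrete _)
  obtain ⟨hnw, hsel⟩ := hH
  obtain ⟨N0, hN0c, hN0⟩ := hnw
  set N : ℕ → Set (Set ↥(chi '' S : Set (X → Bool))) := fun n =>
    (ZcSet S '' C n) ∪ ((fun B => B \ {z}) '' N0) with hNdef
  have hNnet : ∀ n, (N n).Countable ∧ IsNetwork ↥(chi '' S : Set (X → Bool)) (N n) := by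
    intro n
    refine ⟨((hC n).1.image _).union (hN0c.image _), ?_⟩
    intro y U hU hyU
    by_cases hy : y = z
    · rw [hy] at hyU ⊢
      obtain ⟨V, hV, rfl⟩ := isOpen_induced_iff.mp hU
      have hyV : (z : X → Bool) ∈ V := hyU
      obtain ⟨I, u, hIu, hpi⟩ := isOpen_pi_iff.mp hV _ hyV
      obtain ⟨c, hc, hIc⟩ := (hC n).2.2 ↑I I.finite_toSet
      refine ⟨ZcSet S c, Or.inl ⟨c, hc, rfl⟩, hzZc c, ?_⟩
      intro f hf
      refine hpi ?_
      intro i hi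
      have hfi : (f : X → Bool) i = false := hf i (hIc hi)
      rw [hfi]
      have h2 := (hIu i hi).2
      rwa [hzval i] at h2
    · have hU' : IsOpen (U \ {z}) := hU.sdiff isClosed_singleton
      obtain ⟨B, hB, hyB, hBU⟩ := hN0 y (U \ {z}) hU' ⟨hyU, hy⟩
      exact ⟨B \ {z}, Or.inr ⟨B, hB, rfl⟩, ⟨hyB, hy⟩, fun f hf => (hBU hf.1).1⟩
  obtain ⟨F, hF, hloc⟩ := hsel N hNnet
  set g : ℕ → Set ↥(chi '' S : Set (X → Bool)) → Set X := fun n A =>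
    if h : ∃ c ∈ C n, A = ZcSet S c then h.choose else ∅ with hgdef
  refine ⟨fun n => g n '' {A ∈ F n | ∃ c ∈ C n, A = ZcSet S c}, ?_, ?_⟩
  · intro n
    constructor
    · rintro d ⟨A, ⟨hAF, hA⟩, rfl⟩
      simp only [hgdef, dif_pos hA]
      exact hA.choose_spec.1
    · exact ((hF n).2.subset (sep_subset _ _)).image _
  · intro G hG
    have hUopen := hopen G hG
    have hzU : z ∈ {f : ↥(chi '' S : Set (X → Bool)) | ∀ x ∈ G, (f : X → Bool) x = false} :=
      fun x _ => hzval x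
    obtain ⟨k, hk⟩ := hloc z _ hUopen hzU
    filter_upwards [eventually_ge_atTop k] with n hn
    obtain ⟨A, hAF, hzA, hAU⟩ := hk n hn
    have hAN : A ∈ N n := (hF n).1 hAF
    have hA : ∃ c ∈ C n, A = ZcSet S c := by
      rcases hAN with h | ⟨B, hB, rfl⟩
      · obtain ⟨c, hc, hce⟩ := h
        exact ⟨c, hc, hce.symm⟩
      · exact absurd rfl hzA.2
    refine ⟨g n A, ⟨A, ⟨hAF, hA⟩, rfl⟩, ?_⟩
    have hgspec := hA.choose_spec
    have hgc : g n A = hA.choose := by simp only [hgdef, dif_pos hA]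
    rw [hgc]
    intro x hxG
    by_contra hxc
    have hopenc : IsOpen (hA.choose)ᶜ := ((hC n).2.1 _ hgspec.1).isOpen_compl
    obtain ⟨t, htS, hxt, htc⟩ :=
      hbase.exists_subset_of_mem_open (show x ∈ (hA.choose)ᶜ from hxc) hopenc
    have htcS : tᶜ ∈ S := hcompl t htS
    have hfA : (⟨chi tᶜ, ⟨tᶜ, htcS, rfl⟩⟩ : ↥(chi '' S : Set (X → Bool))) ∈ A := by
      rw [hgspec.2]
      intro yy hyy
      have hyyt : yy ∈ tᶜ := fun hyt => htc hyt hyy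
      simp [chi, hyyt]
    have h3 : chi tᶜ x = false := hAU hfA x hxG
    simp only [chi, decide_eq_false_iff_not, not_not] at h3
    exact h3 hxt
end

section
/- The space C_p(2^ω, 2) of continuous functions from the Cantor set to the discrete two-point space, with the pointwise convergence topology, is not M-nw-selective. -/
open Set Filter Topology TopologicalSpace

namespace S18


abbrev Can := ℕ → Bool

def Good (f : Can → Bool) (N : ℕ) : Prop :=
  ∀ z w : Can, (∀ i, i < N → z i = w i) → f z = f w

lemma exists_good {f : Can → Bool} (hf : Continuous f) : ∃ N, Good f N := by
  have hchoice : ∀ z : Can, ∃ I : Finset ℕ, ∀ w : Can, (∀ i ∈ I, w i = z i) → f w = f z := by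
    intro z
    have hop : IsOpen (f ⁻¹' {f z}) := (isOpen_discrete _).preimage hf
    rw [isOpen_pi_iff] at hop
    obtain ⟨I, u, h1, h2⟩ := hop z (by simp)
    refine ⟨I, fun w hw => ?_⟩
    have : w ∈ (I : Set ℕ).pi u := by
      intro i hi
      rw [hw i hi]
      exact (h1 i hi).2
    exact h2 this
  choose I hI using hchoice
  have hBopen : ∀ z : Can, IsOpen {w : Can | ∀ i ∈ I z, w i = z i} := by
    intro z
    have : {w : Can | ∀ i ∈ I z, w i = z i} = ⋂ i ∈ I z, {w : Can | w i = z i} := by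
      ext w; simp
    rw [this]
    refine isOpen_biInter_finset fun i _ => ?_
    have he : {w : Can | w i = z i} = (fun w : Can => w i) ⁻¹' {z i} := rfl
    rw [he]
    exact IsOpen.preimage (continuous_apply i) (isOpen_discrete {z i})
  have hcover : (Set.univ : Set Can) ⊆ ⋃ z : Can, {w : Can | ∀ i ∈ I z, w i = z i} := by
    intro z _
    exact Set.mem_iUnion.mpr ⟨z, fun i _ => rfl⟩
  obtain ⟨t, ht⟩ := isCompact_univ.elim_finite_subcover _ hBopen hcover
  refine ⟨(t.sup fun z => (I z).sup id) + 1, ?_⟩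
  intro z w hzw
  have hz : z ∈ ⋃ z₀ ∈ t, {w : Can | ∀ i ∈ I z₀, w i = z₀ i} := ht (Set.mem_univ z)
  rw [Set.mem_iUnion₂] at hz
  obtain ⟨z₀, hz₀t, hzB⟩ := hz
  have hwB : ∀ i ∈ I z₀, w i = z₀ i := by
    intro i hi
    have hlt : i < (t.sup fun z => (I z).sup id) + 1 :=
      Nat.lt_succ_of_le (le_trans (Finset.le_sup (f := id) hi)
        (Finset.le_sup (f := fun z => (I z).sup id) hz₀t))
    rw [← hzw i hlt]
    exact hzB i hi
  rw [hI z₀ z hzB, hI z₀ w hwB]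

noncomputable def code (f : {f : Can → Bool | Continuous f}) :
    Σ N : ℕ, (Fin N → Bool) → Bool :=
  ⟨Classical.choose (exists_good f.2),
    fun v => f.val (fun i => if h : i < Classical.choose (exists_good f.2) then v ⟨i, h⟩ else false)⟩

noncomputable def evalCode (p : Σ N : ℕ, (Fin N → Bool) → Bool) (z : Can) : Bool :=
  p.2 (fun i => z i.val)

lemma evalCode_code (f : {f : Can → Bool | Continuous f}) (z : Can) :
    evalCode (code f) z = f.val z := by
  have hg := Classical.choose_spec (exists_good f.2)
  exact (hg z _ (fun i hi => by simp [hi])).symm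

instance : Countable ↥{f : Can → Bool | Continuous f} := by
  have hinj : Function.Injective code := by
    intro f g hfg
    apply Subtype.ext
    funext z
    rw [← evalCode_code f z, ← evalCode_code g z, hfg]
  exact hinj.countable


def O (n k : ℕ) : Set Can :=
  {z | (∀ j ≤ k, z (Nat.pair n j) = true) ∧ ∃ m, z (Nat.pair n m) = false}

abbrev Yt := ↥{f : Can → Bool | Continuous f}

def AA (n k : ℕ) (h : Yt) : Set Yt := {g | ∀ z ∈ (O n k)ᶜ, g.val z = h.val z}

def NN (n : ℕ) : Set (Set Yt) := Set.range fun p : ℕ × Yt => AA n p.1 p.2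

lemma NN_countable (n : ℕ) : (NN n).Countable := Set.countable_range _

lemma exists_K (n : ℕ) (z : Can) : ∃ K : ℕ, ∀ k, K ≤ k → z ∈ (O n k)ᶜ := by
  by_cases hz : ∃ m, z (Nat.pair n m) = false
  · obtain ⟨m, hm⟩ := hz
    refine ⟨m, fun k hk hmem => ?_⟩
    have := hmem.1 m hk
    rw [hm] at this
    exact Bool.false_ne_true this
  · exact ⟨0, fun k _ hmem => hz hmem.2⟩

lemma NN_network (n : ℕ) : IsNetwork Yt (NN n) := by
  intro f U hU hfU
  obtain ⟨V, hV, rfl⟩ := isOpen_induced_iff.mp hU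
  have hfV : f.val ∈ V := hfU
  rw [isOpen_pi_iff] at hV
  obtain ⟨I, u, h1, h2⟩ := hV f.val hfV
  choose K hK using exists_K n
  set k := I.sup K with hk
  refine ⟨AA n k f, ⟨(k, f), rfl⟩, fun z _ => rfl, ?_⟩
  intro g hg
  apply h2
  intro x hx
  have hxI : x ∈ I := hx
  have hxC : x ∈ (O n k)ᶜ := hK x k (Finset.le_sup (f := K) hxI)
  rw [hg x hxC]
  exact (h1 x hxI).2

lemma continuous_cyl (z : Can) (J : Finset ℕ) :
    Continuous fun w : Can => decide (∀ i ∈ J, w i = z i) := by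
  have h1 : Continuous fun w : Can => (fun i : J => w i.val) :=
    continuous_pi fun i => continuous_apply _
  have he : (fun w : Can => decide (∀ i ∈ J, w i = z i)) =
      (fun v : J → Bool => decide (∀ i : J, v i = z i.val)) ∘ (fun w (i : J) => w i.val) := by
    funext w
    simp
  rw [he]
  exact Continuous.comp continuous_of_discreteTopology h1

theorem not_mnw : ¬ MNwSelective Yt := by
  rintro ⟨-, hsel⟩
  obtain ⟨F, hF, hnet⟩ := hsel NN fun n => ⟨NN_countable n, NN_network n⟩
  have hbound : ∀ n, ∃ b : ℕ, ∀ A ∈ F n, ∃ k ≤ b, ∃ h : Yt, A = AA n k h := by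
    intro n
    have hfin : ((fun A : Set Yt => sInf {k | ∃ h : Yt, A = AA n k h}) '' F n).Finite :=
      (hF n).2.image _
    obtain ⟨b, hb⟩ := hfin.bddAbove
    refine ⟨b, fun A hA => ?_⟩
    have hne : {k | ∃ h : Yt, A = AA n k h}.Nonempty := by
      obtain ⟨⟨k, h⟩, rfl⟩ := (hF n).1 hA
      exact ⟨k, h, rfl⟩
    obtain ⟨h, hh⟩ := Nat.sInf_mem hne
    exact ⟨_, hb ⟨A, hA, rfl⟩, h, hh⟩
  choose g hg using hbound
  set zstar : Can := fun i => decide ((Nat.unpair i).2 ≤ g (Nat.unpair i).1) with hzs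
  have hzpair : ∀ n m, zstar (Nat.pair n m) = decide (m ≤ g n) := by
    intro n m; simp [hzs]
  let U : Set Yt := {x | x.val zstar = false}
  have hUopen : IsOpen U := by
    have he : U = (fun x : Yt => x.val zstar) ⁻¹' {false} := rfl
    rw [he]
    exact IsOpen.preimage ((continuous_apply zstar).comp continuous_subtype_val)
      (isOpen_discrete {false})
  have hf0 : (⟨fun _ => false, continuous_const⟩ : Yt) ∈ U := rfl
  obtain ⟨A, hAmem, hf0A, hAU⟩ := hnet _ U hUopen hf0
  rw [Set.mem_iUnion] at hAmem
  obtain ⟨n, hAn⟩ := hAmem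
  obtain ⟨k, hkg, h, rfl⟩ := hg n A hAn
  -- build chi
  set J : Finset ℕ := (Finset.range (k + 1)).image (Nat.pair n) ∪ {Nat.pair n (g n + 1)} with hJ
  set chif : Can → Bool := fun w => decide (∀ i ∈ J, w i = zstar i) with hchif
  have hchicont : Continuous chif := continuous_cyl zstar J
  have hchiA : (⟨chif, hchicont⟩ : Yt) ∈ AA n k h := by
    intro z hz
    have h1 : h.val z = false := (hf0A z hz).symm
    show chif z = h.val z
    rw [h1]
    by_contra hne
    have htrue : chif z = true := by
      cases hc : chif z
      · exact absurd hc hne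
      · rfl
    have hag : ∀ i ∈ J, z i = zstar i := of_decide_eq_true htrue
    apply hz
    constructor
    · intro j hj
      have hjJ : Nat.pair n j ∈ J := by
        rw [hJ]
        exact Finset.mem_union_left _
          (Finset.mem_image.mpr ⟨j, Finset.mem_range.mpr (Nat.lt_succ_of_le hj), rfl⟩)
      rw [hag _ hjJ, hzpair]
      exact decide_eq_true (le_trans hj hkg)
    · refine ⟨g n + 1, ?_⟩
      have hjJ : Nat.pair n (g n + 1) ∈ J := by
        rw [hJ]
        exact Finset.mem_union_right _ (Finset.mem_singleton_self _)
      rw [hag _ hjJ, hzpair]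
      simp
  have hfalse : chif zstar = false := hAU hchiA
  have htrue : chif zstar = true := by
    rw [hchif]
    exact decide_eq_true fun i _ => rfl
  rw [hfalse] at htrue
  exact Bool.false_ne_true htrue

end S18

theorem stmt18 :
    ¬ MNwSelective ↥{f : (ℕ → Bool) → Bool | Continuous f} := S18.not_mnw
end

section
/- Let X be a metrizable separable zero-dimensional space and 𝒮 a countable clopen base of X closed under finite unions and complements. If Y_𝒮 = {χ_S : S ∈ 𝒮} ⊆ C_p(X, 2) is R-nw-selective, then X satisfies S₁(𝒞_Ω, 𝒞_Ω): for every sequence (𝒞ₙ : n ∈ ω) of countable closed ω-covers of X one can choose Cₙ ∈ 𝒞ₙ such that {Cₙ : n ∈ ω} is an ω-cover of X. -/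
open Set Filter Topology TopologicalSpace

attribute [local instance] Classical.propDecidable

section Aux

variable {X : Type} [TopologicalSpace X]

lemma chi_eq_false {T : Set X} {x : X} : chi T x = false ↔ x ∈ T := by
  simp [chi]

/-- The set `[c,0] ∩ Y` of functions in `Y = chi '' S` vanishing on `c`. -/
def zset (S : Set (Set X)) (c : Set X) : Set ↥(chi '' S : Set (X → Bool)) :=
  {y | ∀ x ∈ c, (y : X → Bool) x = false}

lemma sep_of_closed {S : Set (Set X)} (hbase : TopologicalSpace.IsTopologicalBasis S)
    (hcompl : ∀ s ∈ S, sᶜ ∈ S) {c : Set X} {x : X} (hc : IsClosed c) (hx : x ∉ c) :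
    ∃ T ∈ S, c ⊆ T ∧ x ∉ T := by
  obtain ⟨s, hs, hxs, hsub⟩ :=
    hbase.exists_subset_of_mem_open (show x ∈ cᶜ from hx) hc.isOpen_compl
  exact ⟨sᶜ, hcompl s hs, fun z hz hzs => hsub hzs hz, fun h => h hxs⟩

end Aux

theorem stmt19 (X : Type) [TopologicalSpace X]
    [TopologicalSpace.MetrizableSpace X] [TopologicalSpace.SeparableSpace X]
    (S : Set (Set X)) (hSc : S.Countable) (hclopen : ∀ s ∈ S, IsClopen s)
    (hbase : TopologicalSpace.IsTopologicalBasis S)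
    (hunion : ∀ s ∈ S, ∀ t ∈ S, s ∪ t ∈ S) (hcompl : ∀ s ∈ S, sᶜ ∈ S)
    (hR : RNwSelective ↥(chi '' S : Set (X → Bool))) :
    ∀ C : ℕ → Set (Set X),
      (∀ n, (C n).Countable ∧ (∀ c ∈ C n, IsClosed c) ∧
        (∀ F : Set X, F.Finite → ∃ c ∈ C n, F ⊆ c)) →
      ∃ c : ℕ → Set X, (∀ n, c n ∈ C n) ∧
        ∀ F : Set X, F.Finite → ∃ n, F ⊆ c n := by
  intro C hC
  by_cases hX : Nonempty X
  swap
  · choose c hc1 _ using fun n => (hC n).2.2 ∅ Set.finite_empty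
    exact ⟨c, hc1, fun F _ => ⟨0, fun x _ => absurd ⟨x⟩ hX⟩⟩
  -- `univ ∈ S`
  obtain ⟨x₀⟩ := hX
  obtain ⟨s₀, hs₀, -, -⟩ :=
    hbase.exists_subset_of_mem_open (Set.mem_univ x₀) isOpen_univ
  have huniv : Set.univ ∈ S := by
    have := hunion s₀ hs₀ s₀ᶜ (hcompl s₀ hs₀)
    rwa [Set.union_compl_self] at this
  -- the zero function
  set f₀ : ↥(chi '' S : Set (X → Bool)) := ⟨chi Set.univ, ⟨Set.univ, huniv, rfl⟩⟩ with hf₀def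
  have hf₀ : ∀ x : X, (f₀ : X → Bool) x = false := fun x => chi_eq_false.2 (Set.mem_univ x)
  obtain ⟨M, hMc, hMnet⟩ := hR.1
  -- the sequence of networks
  set N : ℕ → Set (Set ↥(chi '' S : Set (X → Bool))) :=
    fun n => (zset S '' C n) ∪ {A ∈ M | f₀ ∉ A} with hNdef
  have hNprop : ∀ n, (N n).Countable ∧ IsNetwork _ (N n) := by
    intro n
    constructor
    · exact ((hC n).1.image _).union (hMc.mono (Set.sep_subset _ _))
    · intro y U hU hyU
      by_cases hy : y = f₀
      · subst hy
        obtain ⟨V, hVopen, rfl⟩ := isOpen_induced_iff.1 hU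
        obtain ⟨I, u, hIu, hpi⟩ := isOpen_pi_iff.1 hVopen _ hyU
        obtain ⟨c, hcC, hcF⟩ := (hC n).2.2 ↑I I.finite_toSet
        refine ⟨zset S c, Or.inl ⟨c, hcC, rfl⟩, fun x _ => hf₀ x, ?_⟩
        intro z hz
        refine hpi ?_
        rw [Set.mem_pi]
        intro a ha
        have hz' : (z : X → Bool) a = false := hz a (hcF ha)
        have := (hIu a ha).2
        rw [hf₀ a] at this
        rwa [hz']
      · have hne : (y : X → Bool) ≠ (f₀ : X → Bool) := fun h => hy (Subtype.ext h)
        obtain ⟨x₁, hx₁⟩ := Function.ne_iff.1 hne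
        have hyt : (y : X → Bool) x₁ = true := by
          rw [hf₀ x₁] at hx₁
          simpa using hx₁
        have hWopen : IsOpen (U ∩ {z : ↥(chi '' S : Set (X → Bool)) | (z : X → Bool) x₁ = true}) := by
          refine hU.inter ?_
          have hcont : Continuous (fun z : ↥(chi '' S : Set (X → Bool)) => (z : X → Bool) x₁) :=
            (continuous_apply x₁).comp continuous_subtype_val
          exact hcont.isOpen_preimage ({true} : Set Bool) (isOpen_discrete _)
        obtain ⟨A, hA, hyA, hAW⟩ := hMnet y _ hWopen ⟨hyU, hyt⟩
        refine ⟨A, Or.inr ⟨hA, fun hf => ?_⟩, hyA, fun z hz => (hAW hz).1⟩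
        have := (hAW hf).2
        rw [Set.mem_setOf_eq, hf₀ x₁] at this
        exact Bool.false_ne_true this
  obtain ⟨s, hsN, hsnet⟩ := hR.2 N hNprop
  -- choose the covers
  have hsel : ∀ n, ∃ c ∈ C n, ((∃ c' ∈ C n, s n = zset S c') → s n = zset S c) := by
    intro n
    by_cases h : ∃ c ∈ C n, s n = zset S c
    · obtain ⟨c, hc1, hc2⟩ := h
      exact ⟨c, hc1, fun _ => hc2⟩
    · obtain ⟨c, hc1, -⟩ := (hC n).2.2 ∅ Set.finite_empty
      exact ⟨c, hc1, fun hh => absurd hh h⟩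
  choose c' hc'1 hc'2 using hsel
  refine ⟨c', hc'1, ?_⟩
  intro F hF
  set U : Set ↥(chi '' S : Set (X → Bool)) :=
    {y | ∀ x ∈ F, (y : X → Bool) x = false} with hUdef
  have hUopen : IsOpen U := by
    have hEq : U = ⋂ x ∈ F, {y : ↥(chi '' S : Set (X → Bool)) | (y : X → Bool) x = false} := by
      ext y
      simp [hUdef]
    rw [hEq]
    refine hF.isOpen_biInter fun x _ => ?_
    have hcont : Continuous (fun z : ↥(chi '' S : Set (X → Bool)) => (z : X → Bool) x) :=
      (continuous_apply x).comp continuous_subtype_val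
    exact hcont.isOpen_preimage ({false} : Set Bool) (isOpen_discrete _)
  obtain ⟨A, hA, hfA, hAU⟩ := hsnet f₀ U hUopen (fun x _ => hf₀ x)
  obtain ⟨n, rfl⟩ := Set.mem_range.1 hA
  rcases hsN n with ⟨c, hcC, hceq⟩ | ⟨-, hf⟩
  swap
  · exact absurd hfA hf
  have hseq : s n = zset S (c' n) := hc'2 n ⟨c, hcC, hceq.symm⟩
  refine ⟨n, fun x hxF => ?_⟩
  by_contra hxc
  obtain ⟨T, hTS, hcT, hxT⟩ :=
    sep_of_closed hbase hcompl ((hC n).2.1 _ (hc'1 n)) hxc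
  have hmem : (⟨chi T, ⟨T, hTS, rfl⟩⟩ : ↥(chi '' S : Set (X → Bool))) ∈ s n := by
    rw [hseq]
    intro z hz
    exact chi_eq_false.2 (hcT hz)
  have := hAU hmem x hxF
  exact hxT (chi_eq_false.1 this)
end
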